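/- Let R be a d×d real matrix, set M = R·Rᵀ, and let s ∈ ℝᵈ. Define φ = Rᵀs, r = 1/(1 + √(1/(1 + φᵀφ))), and R' = R − r·(Rφ)φᵀ/(1 + φᵀφ). Then R'·(R')ᵀ = M − (M s sᵀ M)/(1 + sᵀ M s). -/

import Mathlib

/-!
With `u = Rφ` and `k = r/(1 + φᵀφ)`, expanding `(R - k u φᵀ)(R - k u φᵀ)ᵀ` gives
`RRᵀ - (2k - k² φᵀφ) u uᵀ`, while `M s sᵀ M = u uᵀ` and `sᵀ M s = φᵀφ`. The value of `r`
makes `k` a root of the quadratic `2k - k² φᵀφ = 1/(1 + φᵀφ)`.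
-/

open Matrix

section RankOneFactor

variable {l m n α : Type*}

theorem mul_vecMulVec_mul [NonUnitalSemiring α] [Fintype m] (A : Matrix l m α) (x y : m → α)
    (B : Matrix m n α) : A * vecMulVec x y * B = vecMulVec (A *ᵥ x) (y ᵥ* B) := by
  rw [mul_vecMulVec, vecMulVec_mul]

theorem mul_transpose_mul_vecMulVec_mul_mul_transpose [CommSemiring α] [Fintype m] [Fintype n]
    (R : Matrix m n α) (s : m → α) :
    R * Rᵀ * vecMulVec s s * (R * Rᵀ) = vecMulVec (R *ᵥ (Rᵀ *ᵥ s)) (R *ᵥ (Rᵀ *ᵥ s)) := by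
  rw [mul_vecMulVec_mul, ← mulVec_mulVec, ← vecMul_vecMul, vecMul_transpose, ← mulVec_transpose]

theorem dotProduct_mul_transpose_mulVec [CommSemiring α] [Fintype m] [Fintype n]
    (R : Matrix m n α) (s : m → α) :
    s ⬝ᵥ (R * Rᵀ) *ᵥ s = (Rᵀ *ᵥ s) ⬝ᵥ (Rᵀ *ᵥ s) := by
  rw [← mulVec_mulVec, dotProduct_mulVec, ← mulVec_transpose]

theorem sub_smul_vecMulVec_mul_transpose_self [CommRing α] [Fintype n] (R : Matrix m n α)
    (φ : n → α) (k : α) :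
    (R - k • vecMulVec (R *ᵥ φ) φ) * (R - k • vecMulVec (R *ᵥ φ) φ)ᵀ =
      R * Rᵀ - (2 * k - k ^ 2 * (φ ⬝ᵥ φ)) • vecMulVec (R *ᵥ φ) (R *ᵥ φ) := by
  have h₁ : R * vecMulVec φ (R *ᵥ φ) = vecMulVec (R *ᵥ φ) (R *ᵥ φ) := mul_vecMulVec ..
  have h₂ : vecMulVec (R *ᵥ φ) φ * Rᵀ = vecMulVec (R *ᵥ φ) (R *ᵥ φ) := by
    rw [vecMulVec_mul, vecMul_transpose]
  have h₃ : vecMulVec (R *ᵥ φ) φ * vecMulVec φ (R *ᵥ φ) =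
      (φ ⬝ᵥ φ) • vecMulVec (R *ᵥ φ) (R *ᵥ φ) := by
    rw [vecMulVec_mul_vecMulVec, vecMulVec_smul]
  simp only [transpose_sub, transpose_smul, transpose_vecMulVec, Matrix.sub_mul, Matrix.mul_sub,
    Matrix.smul_mul, Matrix.mul_smul, h₁, h₂, h₃]
  module

end RankOneFactor

-- With `t = √(1/(1+a))`, so that `t² (1+a) = 1`, the coefficient `k` satisfies
-- `k (1+t) = t²` and `k a = 1 - t`.
theorem two_mul_sub_sq_mul_eq_inv {a : ℝ} (ha : 0 ≤ a) :
    2 * (1 / (1 + √(1 / (1 + a))) / (1 + a))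
      - (1 / (1 + √(1 / (1 + a))) / (1 + a)) ^ 2 * a = (1 + a)⁻¹ := by
  set t := √(1 / (1 + a))
  set k := 1 / (1 + t) / (1 + a)
  have ht₀ : 0 ≤ t := Real.sqrt_nonneg _
  have ht : t ^ 2 = (1 + a)⁻¹ := by rw [Real.sq_sqrt (by positivity), one_div]
  have hk : k * (1 + t) = t ^ 2 := by
    simp only [k, ht]; field_simp
  have hka : k * a = 1 - t := by
    have ht' : t ^ 2 * (1 + a) = 1 := by rw [ht]; field_simp
    simp only [k]; field_simp; linear_combination ht'
  linear_combination (-k) * hka + hk + ht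

/-- Iterative square-root update of Fisher adaptive MALA: if `R Rᵀ = M`,
`φ = Rᵀs`, `r = 1/(1 + √(1/(1 + φᵀφ)))` and
`R' = R − r (Rφ)φᵀ/(1 + φᵀφ)`, then
`R' R'ᵀ = M − M s sᵀ M/(1 + sᵀ M s)`. -/
theorem sqrt_factor_rank_one_update
    {d : ℕ} (R : Matrix (Fin d) (Fin d) ℝ) (s : Fin d → ℝ) :
    let M : Matrix (Fin d) (Fin d) ℝ := R * Rᵀ
    let φ : Fin d → ℝ := Rᵀ *ᵥ s
    let r : ℝ := 1 / (1 + Real.sqrt (1 / (1 + φ ⬝ᵥ φ)))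
    let R' : Matrix (Fin d) (Fin d) ℝ :=
      R - (r / (1 + φ ⬝ᵥ φ)) • Matrix.vecMulVec (R *ᵥ φ) φ
    R' * R'ᵀ = M - (1 + s ⬝ᵥ (M *ᵥ s))⁻¹ • (M * Matrix.vecMulVec s s * M) := by
  intro M φ r R'
  have hφ : 0 ≤ φ ⬝ᵥ φ := dotProduct_self_star_nonneg φ
  rw [sub_smul_vecMulVec_mul_transpose_self, mul_transpose_mul_vecMulVec_mul_mul_transpose,
    dotProduct_mul_transpose_mulVec, two_mul_sub_sq_mul_eq_inv hφ]
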